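/- Let K ≥ 3 be odd, let l be an odd positive integer, and let x ∈ ℝ^K (indices taken mod K). Then Σ_{k=0}^{K-1} Σ_{i1' odd, 1 ≤ i1' < K−2} ((K−i1'−2)/2) Σ_{i1'<i2'<⋯<i_{l-1}'<K, each ij' ≡ j (mod 2)} x_k x_{(i1'+k) mod K} ∏_{1<j<l} x_{(ij'+k) mod K} = ( ((l−1)/2)·K − l )·Σ_{0≤i0<⋯<i_{l-1}<K, all consecutive differences ij − i_{j-1} odd} ∏_{j=0}^{l-1} x_{ij}. -/
import Mathlib


open scoped Classical

/-- `f3^(K)(x) = Σ x_{i0} x_{i1} x_{i2}` over `0 ≤ i0 < i1 < i2 < K` with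
`i1 - i0` and `i2 - i1` odd. -/
def f3 (K : ℕ) (x : Fin K → ℝ) : ℝ :=
  ∑ t ∈ Finset.univ.filter
      (fun t : Fin K × Fin K × Fin K =>
        t.1 < t.2.1 ∧ t.2.1 < t.2.2 ∧
        Odd (t.2.1.val - t.1.val) ∧ Odd (t.2.2.val - t.2.1.val)),
    x t.1 * x t.2.1 * x t.2.2

/-- `f5^(K)(x) = Σ x_{i0} x_{i1} x_{i2} x_{i3} x_{i4}` over `0 ≤ i0 < ⋯ < i4 < K`
with all consecutive differences odd. -/
def f5 (K : ℕ) (x : Fin K → ℝ) : ℝ :=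
  ∑ t ∈ Finset.univ.filter
      (fun t : Fin K × Fin K × Fin K × Fin K × Fin K =>
        t.1 < t.2.1 ∧ t.2.1 < t.2.2.1 ∧ t.2.2.1 < t.2.2.2.1 ∧ t.2.2.2.1 < t.2.2.2.2 ∧
        Odd (t.2.1.val - t.1.val) ∧ Odd (t.2.2.1.val - t.2.1.val) ∧
        Odd (t.2.2.2.1.val - t.2.2.1.val) ∧ Odd (t.2.2.2.2.val - t.2.2.2.1.val)),
    x t.1 * x t.2.1 * x t.2.2.1 * x t.2.2.2.1 * x t.2.2.2.2

/-- `f^(K) := f3^(K) - 24 · f5^(K)`. -/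
def fHerman (K : ℕ) (x : Fin K → ℝ) : ℝ := f3 K x - 24 * f5 K x

namespace FancyAux

variable {n : ℕ}

lemma fin_sub_val (a b : Fin n) :
    (a - b).val = if b.val ≤ a.val then a.val - b.val else a.val + n - b.val := by
  have hn : 0 < n := a.pos
  have ha := a.isLt
  have hb := b.isLt
  rw [Fin.sub_def]
  show (n - b.val + a.val) % n = _
  by_cases h : b.val ≤ a.val
  · rw [if_pos h, show n - b.val + a.val = (a.val - b.val) + n by omega,
      Nat.add_mod_right, Nat.mod_eq_of_lt (by omega)]
  · rw [if_neg h, Nat.mod_eq_of_lt (by omega)]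
    omega

lemma fin_add_val (a b : Fin n) : (a + b).val = (a.val + b.val) % n := by
  rw [Fin.add_def]

lemma fin_add_val_ite (a b : Fin n) :
    (a + b).val = if a.val + b.val < n then a.val + b.val else a.val + b.val - n := by
  have ha := a.isLt
  have hb := b.isLt
  rw [fin_add_val]
  split_ifs with h
  · exact Nat.mod_eq_of_lt h
  · rw [Nat.mod_eq_sub_mod (by omega), Nat.mod_eq_of_lt (by omega)]

lemma fin_sub_add_cancel (a b : Fin n) : a - b + b = a := by
  have ha := a.isLt; have hb := b.isLt
  apply Fin.ext
  rw [fin_add_val_ite, fin_sub_val]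
  split_ifs <;> omega

lemma fin_add_sub_cancel_left (a b : Fin n) : a + b - a = b := by
  have ha := a.isLt; have hb := b.isLt
  apply Fin.ext
  rw [fin_sub_val, fin_add_val_ite]
  split_ifs <;> omega

lemma fin_add_sub_cancel (a b : Fin n) : a + b - b = a := by
  have ha := a.isLt; have hb := b.isLt
  apply Fin.ext
  rw [fin_sub_val, fin_add_val_ite]
  split_ifs <;> omega

lemma fin_add_sub_self (a b : Fin n) : b + (a - b) = a := by
  have ha := a.isLt; have hb := b.isLt
  apply Fin.ext
  rw [fin_add_val_ite, fin_sub_val]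
  split_ifs <;> omega

variable {K l : ℕ}

lemma val_mono {i : Fin l → Fin K} (h : StrictMono i) {a b : Fin l}
    (hab : a.val < b.val) : (i a).val < (i b).val := by
  have : a < b := by rwa [Fin.lt_def]
  have := h this
  rwa [Fin.lt_def] at this

lemma val_mono_le {i : Fin l → Fin K} (h : StrictMono i) {a b : Fin l}
    (hab : a.val ≤ b.val) : (i a).val ≤ (i b).val := by
  have : a ≤ b := by rwa [Fin.le_def]
  have := h.monotone this
  rwa [Fin.le_def] at this

lemma val_mono_mk {i : Fin l → Fin K} (h : StrictMono i) {a b : ℕ}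
    (ha : a < l) (hb : b < l) (hab : a < b) : (i ⟨a, ha⟩).val < (i ⟨b, hb⟩).val :=
  val_mono h hab

lemma val_mono_le_mk {i : Fin l → Fin K} (h : StrictMono i) {a b : ℕ}
    (ha : a < l) (hb : b < l) (hab : a ≤ b) : (i ⟨a, ha⟩).val ≤ (i ⟨b, hb⟩).val :=
  val_mono_le h hab

lemma filter_val_ge_card (c : ℕ) :
    ((Finset.univ : Finset (Fin l)).filter (fun j => c ≤ j.val)).card = l - c := by
  by_cases hc : c < l
  · have : (Finset.univ : Finset (Fin l)).filter (fun j => c ≤ j.val)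
        = Finset.Ici (⟨c, hc⟩ : Fin l) := by
      ext y
      simp only [Finset.mem_filter, Finset.mem_univ, true_and, Finset.mem_Ici, Fin.le_def]
    rw [this, Fin.card_Ici]
  · have : (Finset.univ : Finset (Fin l)).filter (fun j => c ≤ j.val) = ∅ := by
      apply Finset.filter_false_of_mem
      intro y _
      have := y.isLt
      omega
    rw [this, Finset.card_empty]
    omega

lemma filter_upward (p : Fin l → Prop) [DecidablePred p]
    (hup : ∀ j1 j2 : Fin l, j1 ≤ j2 → p j1 → p j2) (j : Fin l) :
    p j ↔ l - ((Finset.univ : Finset (Fin l)).filter p).card ≤ j.val := by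
  by_cases hne : ((Finset.univ : Finset (Fin l)).filter p).Nonempty
  · obtain ⟨a, ha, hmin⟩ : ∃ a ∈ (Finset.univ : Finset (Fin l)).filter p,
        ∀ y ∈ (Finset.univ : Finset (Fin l)).filter p, a ≤ y :=
      ⟨_, Finset.min'_mem _ hne, fun y hy => Finset.min'_le _ y hy⟩
    have hpa : p a := (Finset.mem_filter.mp ha).2
    have hSeq : (Finset.univ : Finset (Fin l)).filter p = Finset.Ici a := by
      ext y
      simp only [Finset.mem_filter, Finset.mem_univ, true_and, Finset.mem_Ici]
      constructor
      · intro hy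
        exact hmin y (Finset.mem_filter.mpr ⟨Finset.mem_univ y, hy⟩)
      · intro hy
        exact hup a y hy hpa
    rw [hSeq, Fin.card_Ici]
    have hav := a.isLt
    constructor
    · intro hp
      have hj : j ∈ Finset.Ici a := by
        rw [← hSeq]
        exact Finset.mem_filter.mpr ⟨Finset.mem_univ j, hp⟩
      have := Fin.le_def.mp (Finset.mem_Ici.mp hj)
      omega
    · intro hle
      exact hup a j (Fin.le_def.mpr (by omega)) hpa
  · rw [Finset.not_nonempty_iff_eq_empty] at hne
    rw [hne]
    simp only [Finset.card_empty, Nat.sub_zero]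
    constructor
    · intro hp
      exfalso
      have hj : j ∈ (Finset.univ : Finset (Fin l)).filter p :=
        Finset.mem_filter.mpr ⟨Finset.mem_univ j, hp⟩
      rw [hne] at hj
      exact absurd hj (Finset.notMem_empty j)
    · intro h
      have := j.isLt
      omega

/-- the number of indices whose shifted value wraps around -/
noncomputable def mcount (k : Fin K) (i' : Fin l → Fin K) : ℕ :=
  ((Finset.univ : Finset (Fin l)).filter (fun j => K ≤ (i' j).val + k.val)).card

lemma mcount_spec (k : Fin K) (i' : Fin l → Fin K) (hmono : StrictMono i') (j : Fin l) :
    K ≤ (i' j).val + k.val ↔ l - mcount k i' ≤ j.val :=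
  filter_upward _ (fun j1 j2 h12 hp => by
    have hp' : K ≤ (i' j1).val + k.val := hp
    have := val_mono_le hmono (Fin.le_def.mp h12)
    show K ≤ (i' j2).val + k.val
    omega) j

lemma mcount_lt (hl : 0 < l) (k : Fin K) (i' : Fin l → Fin K) (hmono : StrictMono i')
    (h0 : ∀ h : 0 < l, (i' ⟨0, h⟩).val = 0) : mcount k i' < l := by
  have hs := mcount_spec k i' hmono ⟨0, hl⟩
  have hk := k.isLt
  rw [h0 hl] at hs
  omega

/-- parity alternation along an admissible tuple -/
lemma parityA (hl : 0 < l) (i : Fin l → Fin K) (hmono : StrictMono i)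
    (hodd : ∀ (j : Fin l) (hj : j.val + 1 < l), Odd ((i ⟨j.val + 1, hj⟩).val - (i j).val)) :
    ∀ j : Fin l, (i j).val % 2 = ((i ⟨0, hl⟩).val + j.val) % 2 := by
  suffices H : ∀ jv (h : jv < l), (i ⟨jv, h⟩).val % 2 = ((i ⟨0, hl⟩).val + jv) % 2 by
    intro j
    exact H j.val j.isLt
  intro jv
  induction jv with
  | zero => intro h; simp
  | succ v ih =>
    intro h
    have hv : v < l := by omega
    have h1 : Odd ((i ⟨v + 1, h⟩).val - (i ⟨v, hv⟩).val) := hodd ⟨v, hv⟩ h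
    have h2 : (i ⟨v, hv⟩).val < (i ⟨v + 1, h⟩).val := val_mono_mk hmono hv h (by omega)
    obtain ⟨c, hc⟩ := h1
    have h3 := ih hv
    omega

/-- value formula for the shifted-back tuple -/
lemma psi_val (hl : 0 < l) (k : Fin K) (i' : Fin l → Fin K)
    (hmono : StrictMono i') (m : Fin l) (hm : m.val = mcount k i') (t : Fin l) :
    ∃ (jv : ℕ) (hjv : jv < l), t - m = ⟨jv, hjv⟩ ∧
      ((m.val ≤ t.val ∧ jv = t.val - m.val ∧ (i' ⟨jv, hjv⟩).val + k.val < K ∧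
          (i' (t - m) + k).val = (i' ⟨jv, hjv⟩).val + k.val) ∨
       (t.val < m.val ∧ jv = t.val + l - m.val ∧ K ≤ (i' ⟨jv, hjv⟩).val + k.val ∧
          (i' (t - m) + k).val = (i' ⟨jv, hjv⟩).val + k.val - K)) := by
  have ht := t.isLt
  have hmv := m.isLt
  have hK : 0 < K := k.pos
  have hsub := fin_sub_val t m
  refine ⟨(t - m).val, (t - m).isLt, rfl, ?_⟩
  have heta : (⟨(t - m).val, (t - m).isLt⟩ : Fin l) = t - m := rfl
  rw [heta]
  have hspec := mcount_spec k i' hmono (t - m)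
  rw [← hm] at hspec
  by_cases hc : m.val ≤ t.val
  · left
    have hjv : (t - m).val = t.val - m.val := by rw [hsub, if_pos hc]
    have hnw : ¬ (K ≤ (i' (t - m)).val + k.val) := by
      rw [hspec, hjv]
      omega
    refine ⟨hc, hjv, by omega, ?_⟩
    rw [fin_add_val, Nat.mod_eq_of_lt (by omega)]
  · right
    have hjv : (t - m).val = t.val + l - m.val := by rw [hsub, if_neg hc]
    have hw : K ≤ (i' (t - m)).val + k.val := by
      rw [hspec, hjv]
      omega
    refine ⟨by omega, hjv, hw, ?_⟩
    have hik := (i' (t - m)).isLt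
    have hkk := k.isLt
    rw [fin_add_val, Nat.mod_eq_sub_mod hw, Nat.mod_eq_of_lt (by omega)]

/-- the shifted-back tuple is admissible -/
lemma psiA (hK : 3 ≤ K) (hKodd : Odd K) (hl : 1 < l) (hlodd : Odd l)
    (k : Fin K) (i' : Fin l → Fin K) (hmono : StrictMono i')
    (h0 : ∀ h : 0 < l, (i' ⟨0, h⟩).val = 0)
    (hpar : ∀ j : Fin l, (i' j).val % 2 = j.val % 2)
    (m : Fin l) (hm : m.val = mcount k i') :
    StrictMono (fun t => i' (t - m) + k) ∧
      ∀ (j : Fin l) (hj : j.val + 1 < l),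
        Odd ((i' ((⟨j.val + 1, hj⟩ : Fin l) - m) + k).val - (i' (j - m) + k).val) := by
  have hl0 : 0 < l := by omega
  have hK2 : K % 2 = 1 := Nat.odd_iff.mp hKodd
  have hl2 : l % 2 = 1 := Nat.odd_iff.mp hlodd
  constructor
  · intro t1 t2 hlt
    rw [Fin.lt_def] at hlt ⊢
    obtain ⟨jv1, hjv1, he1, hd1⟩ := psi_val hl0 k i' hmono m hm t1
    obtain ⟨jv2, hjv2, he2, hd2⟩ := psi_val hl0 k i' hmono m hm t2
    show (i' (t1 - m) + k).val < (i' (t2 - m) + k).val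
    have hi1 := (i' ⟨jv1, hjv1⟩).isLt
    have hi2 := (i' ⟨jv2, hjv2⟩).isLt
    rcases hd1 with ⟨hc1, hj1, hb1, hv1⟩ | ⟨hc1, hj1, hb1, hv1⟩ <;>
      rcases hd2 with ⟨hc2, hj2, hb2, hv2⟩ | ⟨hc2, hj2, hb2, hv2⟩ <;>
      rw [hv1, hv2]
    · have : (i' ⟨jv1, hjv1⟩).val < (i' ⟨jv2, hjv2⟩).val :=
        val_mono_mk hmono hjv1 hjv2 (by omega)
      omega
    · omega
    · omega
    · have : (i' ⟨jv1, hjv1⟩).val < (i' ⟨jv2, hjv2⟩).val :=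
        val_mono_mk hmono hjv1 hjv2 (by omega)
      omega
  · intro j hj
    have hT : ((⟨j.val + 1, hj⟩ : Fin l)).val = j.val + 1 := rfl
    obtain ⟨jv1, hjv1, he1, hd1⟩ := psi_val hl0 k i' hmono m hm j
    obtain ⟨jv2, hjv2, he2, hd2⟩ := psi_val hl0 k i' hmono m hm ⟨j.val + 1, hj⟩
    have hi1 := (i' ⟨jv1, hjv1⟩).isLt
    have hi2 := (i' ⟨jv2, hjv2⟩).isLt
    have hp1 : (i' ⟨jv1, hjv1⟩).val % 2 = jv1 % 2 := hpar _
    have hp2 : (i' ⟨jv2, hjv2⟩).val % 2 = jv2 % 2 := hpar _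
    have hkk := k.isLt
    have hjv := j.isLt
    rw [Nat.odd_iff]
    rcases hd1 with ⟨hc1, hj1, hb1, hv1⟩ | ⟨hc1, hj1, hb1, hv1⟩ <;>
      rcases hd2 with ⟨hc2, hj2, hb2, hv2⟩ | ⟨hc2, hj2, hb2, hv2⟩
    · -- both non-wrapped: jv2 = jv1 + 1
      have : (i' ⟨jv1, hjv1⟩).val < (i' ⟨jv2, hjv2⟩).val :=
        val_mono_mk hmono hjv1 hjv2 (by omega)
      rw [hv1, hv2]
      omega
    · -- j non-wrapped but j+1 wrapped: impossible
      omega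
    · -- boundary: j wrapped (jv1 = l-1), j+1 = m non-wrapped (jv2 = 0)
      have hz : jv2 = 0 := by omega
      have h00 : (i' ⟨jv2, hjv2⟩).val = 0 := by
        subst hz
        exact h0 hjv2
      rw [hv1, hv2]
      omega
    · -- both wrapped
      have : (i' ⟨jv1, hjv1⟩).val < (i' ⟨jv2, hjv2⟩).val :=
        val_mono_mk hmono hjv1 hjv2 (by omega)
      rw [hv1, hv2]
      omega

/-- value formula for the rotated tuple -/
lemma sigma_val (hl : 0 < l) (i : Fin l → Fin K) (hmono : StrictMono i) (m j : Fin l) :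
    ∃ (tv : ℕ) (htv : tv < l), m + j = ⟨tv, htv⟩ ∧
      ((m.val + j.val < l ∧ tv = m.val + j.val ∧ (i m).val ≤ (i ⟨tv, htv⟩).val ∧
          (i (m + j) - i m).val = (i ⟨tv, htv⟩).val - (i m).val) ∨
       (l ≤ m.val + j.val ∧ tv = m.val + j.val - l ∧ (i ⟨tv, htv⟩).val < (i m).val ∧
          (i (m + j) - i m).val = (i ⟨tv, htv⟩).val + K - (i m).val)) := by
  have hmv := m.isLt
  have hjv := j.isLt
  have hadd := fin_add_val_ite m j
  refine ⟨(m + j).val, (m + j).isLt, rfl, ?_⟩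
  have heta : (⟨(m + j).val, (m + j).isLt⟩ : Fin l) = m + j := rfl
  rw [heta]
  have hsub := fin_sub_val (i (m + j)) (i m)
  by_cases hc : m.val + j.val < l
  · left
    have htv : (m + j).val = m.val + j.val := by rw [hadd, if_pos hc]
    have hle : (i m).val ≤ (i (m + j)).val := val_mono_le hmono (show m.val ≤ (m + j).val by omega)
    exact ⟨hc, htv, hle, by rw [hsub, if_pos hle]⟩
  · right
    have htv : (m + j).val = m.val + j.val - l := by rw [hadd, if_neg hc]
    have hlt : (i (m + j)).val < (i m).val := val_mono hmono (show (m + j).val < m.val by omega)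
    exact ⟨by omega, htv, hlt, by rw [hsub, if_neg (by omega)]⟩

/-- the rotated tuple is a valid shifted tuple -/
lemma sigmaA (hK : 3 ≤ K) (hKodd : Odd K) (hl : 1 < l) (hlodd : Odd l)
    (i : Fin l → Fin K) (hmono : StrictMono i)
    (hodd : ∀ (j : Fin l) (hj : j.val + 1 < l), Odd ((i ⟨j.val + 1, hj⟩).val - (i j).val))
    (m : Fin l) :
    (∀ h : 0 < l, ((i (m + ⟨0, h⟩) - i m)).val = 0) ∧
      StrictMono (fun j => i (m + j) - i m) ∧
      (∀ j : Fin l, ((i (m + j) - i m)).val % 2 = j.val % 2) := by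
  have hl0 : 0 < l := by omega
  have hK2 : K % 2 = 1 := Nat.odd_iff.mp hKodd
  have hl2 : l % 2 = 1 := Nat.odd_iff.mp hlodd
  have hpA := parityA hl0 i hmono hodd
  refine ⟨?_, ?_, ?_⟩
  · intro h
    have hm0 : m + (⟨0, h⟩ : Fin l) = m := by
      apply Fin.ext
      rw [fin_add_val_ite]
      have := m.isLt
      have h00 : ((⟨0, h⟩ : Fin l)).val = 0 := rfl
      rw [h00]
      split_ifs <;> omega
    rw [hm0, fin_sub_val, if_pos le_rfl]
    omega
  · intro j1 j2 hlt
    rw [Fin.lt_def] at hlt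
    show i (m + j1) - i m < i (m + j2) - i m
    rw [Fin.lt_def]
    obtain ⟨tv1, htv1, he1, hd1⟩ := sigma_val hl0 i hmono m j1
    obtain ⟨tv2, htv2, he2, hd2⟩ := sigma_val hl0 i hmono m j2
    have hi1 := (i ⟨tv1, htv1⟩).isLt
    have hi2 := (i ⟨tv2, htv2⟩).isLt
    have him := (i m).isLt
    rcases hd1 with ⟨hc1, ht1, hb1, hv1⟩ | ⟨hc1, ht1, hb1, hv1⟩ <;>
      rcases hd2 with ⟨hc2, ht2, hb2, hv2⟩ | ⟨hc2, ht2, hb2, hv2⟩ <;>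
      rw [hv1, hv2]
    · have : (i ⟨tv1, htv1⟩).val < (i ⟨tv2, htv2⟩).val :=
        val_mono_mk hmono htv1 htv2 (by omega)
      omega
    · omega
    · omega
    · have : (i ⟨tv1, htv1⟩).val < (i ⟨tv2, htv2⟩).val :=
        val_mono_mk hmono htv1 htv2 (by omega)
      omega
  · intro j
    obtain ⟨tv, htv, he, hd⟩ := sigma_val hl0 i hmono m j
    have hpt : (i ⟨tv, htv⟩).val % 2 = ((i ⟨0, hl0⟩).val + tv) % 2 := hpA _
    have hpm : (i m).val % 2 = ((i ⟨0, hl0⟩).val + m.val) % 2 := hpA m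
    have hi := (i ⟨tv, htv⟩).isLt
    have him := (i m).isLt
    have hjv := j.isLt
    rcases hd with ⟨hc, ht, hb, hv⟩ | ⟨hc, ht, hb, hv⟩ <;> rw [hv] <;> omega

/-- recovering the rotation index -/
lemma mcount_sigma (hl : 0 < l) (i : Fin l → Fin K) (hmono : StrictMono i) (m : Fin l) :
    mcount (i m) (fun j => i (m + j) - i m) = m.val := by
  have hmv := m.isLt
  show ((Finset.univ : Finset (Fin l)).filter
      (fun j => K ≤ ((i (m + j) - i m)).val + (i m).val)).card = m.val
  have hfe : ((Finset.univ : Finset (Fin l)).filter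
        (fun j => K ≤ ((i (m + j) - i m)).val + (i m).val))
      = (Finset.univ : Finset (Fin l)).filter (fun j => l - m.val ≤ j.val) := by
    apply Finset.filter_congr
    intro j _
    obtain ⟨tv, htv, he, hd⟩ := sigma_val hl i hmono m j
    have hi := (i ⟨tv, htv⟩).isLt
    have him := (i m).isLt
    have hjv := j.isLt
    rcases hd with ⟨hc, ht, hb, hv⟩ | ⟨hc, ht, hb, hv⟩ <;> rw [hv] <;> omega
  rw [hfe, filter_val_ge_card]
  omega

/-- algebra for the left inverse -/
lemma phi_psi_gen (hl : 0 < l) (k : Fin K) (i' : Fin l → Fin K)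
    (h0 : ∀ h : 0 < l, (i' ⟨0, h⟩).val = 0) (m : Fin l) :
    (i' (m - m) + k = k) ∧ ∀ j : Fin l, (i' (m + j - m) + k) - (i' (m - m) + k) = i' j := by
  have hbase : i' (m - m) + k = k := by
    have hmm : m - m = ⟨0, hl⟩ := by
      apply Fin.ext
      have h00 : ((⟨0, hl⟩ : Fin l)).val = 0 := rfl
      rw [fin_sub_val, if_pos le_rfl, h00]
      omega
    rw [hmm]
    apply Fin.ext
    rw [fin_add_val, h0 hl]
    have := k.isLt
    rw [Nat.mod_eq_of_lt (by omega)]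
    omega
  refine ⟨hbase, fun j => ?_⟩
  rw [hbase, fin_add_sub_cancel_left, fin_add_sub_cancel]


/-- the cyclic gaps sum to `K` -/
lemma gap_sum (hK : 3 ≤ K) (hl : 1 < l) [NeZero l] (i : Fin l → Fin K)
    (hmono : StrictMono i) :
    ∑ m : Fin l, ((i (m + 1) - i m)).val = K := by
  have hl0 : 0 < l := by omega
  have hone : (1 : Fin l).val = 1 := by
    rw [Fin.val_one']
    exact Nat.mod_eq_of_lt hl
  classical
  set G : ℕ → ℕ := fun v => if h : v < l then ((i (⟨v, h⟩ + 1) - i ⟨v, h⟩)).val else 0 with hG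
  have h1 : ∑ m : Fin l, ((i (m + 1) - i m)).val = ∑ m : Fin l, G m.val := by
    refine Finset.sum_congr rfl fun m _ => ?_
    have h2 : G m.val = ((i ((⟨m.val, m.isLt⟩ : Fin l) + 1) - i ⟨m.val, m.isLt⟩)).val :=
      dif_pos m.isLt
    rw [h2]
  rw [h1, Fin.sum_univ_eq_sum_range G l]
  have hcongr : ∀ (a b : ℕ) (p : a < l) (q : b < l), a = b → (i ⟨a, p⟩).val = (i ⟨b, q⟩).val := by
    intro a b p q h
    subst h
    rfl
  obtain ⟨nn, hnn⟩ : ∃ nn, l = nn + 1 := ⟨l - 1, by omega⟩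
  have hnpos : 0 < nn := by omega
  have hnlt : nn < l := by omega
  have hzlt : 0 < l := hl0
  -- split off the last term
  rw [show Finset.range l = Finset.range (nn + 1) by rw [hnn], Finset.sum_range_succ]
  -- the wrap-around term
  have hlast : G nn = (i ⟨0, hzlt⟩).val + K - (i ⟨nn, hnlt⟩).val := by
    rw [hG]
    simp only []
    rw [dif_pos hnlt]
    have hadd : (⟨nn, hnlt⟩ : Fin l) + 1 = ⟨0, hzlt⟩ := by
      apply Fin.ext
      rw [fin_add_val_ite]
      have : ((⟨nn, hnlt⟩ : Fin l)).val = nn := rfl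
      rw [this, hone]
      have h00 : ((⟨0, hzlt⟩ : Fin l)).val = 0 := rfl
      rw [h00]
      split_ifs <;> omega
    rw [hadd, fin_sub_val]
    have hlt : (i ⟨0, hzlt⟩).val < (i ⟨nn, hnlt⟩).val := val_mono_mk hmono hzlt hnlt (by omega)
    rw [if_neg (by omega)]
  -- telescoping part
  set f : ℕ → ℕ := fun v => (i ⟨min v nn, by omega⟩).val with hf
  have hfmono : Monotone f := by
    intro a b hab
    exact val_mono_le_mk hmono _ _ (by omega)
  have hterm : ∀ v ∈ Finset.range nn, G v = f (v + 1) - f v := by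
    intro v hv
    rw [Finset.mem_range] at hv
    have hvl : v < l := by omega
    have hv1l : v + 1 < l := by omega
    rw [hG]
    simp only []
    rw [dif_pos hvl]
    have hadd : (⟨v, hvl⟩ : Fin l) + 1 = ⟨v + 1, hv1l⟩ := by
      apply Fin.ext
      rw [fin_add_val_ite]
      have h1v : ((⟨v, hvl⟩ : Fin l)).val = v := rfl
      rw [h1v, hone]
      have h2v : ((⟨v + 1, hv1l⟩ : Fin l)).val = v + 1 := rfl
      rw [h2v]
      split_ifs <;> omega
    rw [hadd, fin_sub_val]
    have hlt : (i ⟨v, hvl⟩).val < (i ⟨v + 1, hv1l⟩).val := val_mono_mk hmono hvl hv1l (by omega)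
    rw [if_pos (by omega)]
    rw [hf]
    simp only []
    rw [hcongr (min (v + 1) nn) (v + 1) (by omega) hv1l (by omega),
      hcongr (min v nn) v (by omega) hvl (by omega)]
  rw [Finset.sum_congr rfl hterm, Finset.sum_range_tsub hfmono]
  have hfn : f nn = (i ⟨nn, hnlt⟩).val := by
    rw [hf]
    exact hcongr _ _ _ _ (by omega)
  have hf0 : f 0 = (i ⟨0, hzlt⟩).val := by
    rw [hf]
    exact hcongr _ _ _ _ (by omega)
  rw [hfn, hf0, hlast]
  have h01 : (i ⟨0, hzlt⟩).val < (i ⟨nn, hnlt⟩).val := val_mono_mk hmono hzlt hnlt (by omega)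
  have hKb := (i ⟨nn, hnlt⟩).isLt
  omega

/-- sum of the weights over all rotations -/
lemma weight_sum (hK : 3 ≤ K) (hl : 1 < l) [NeZero l] (i : Fin l → Fin K)
    (hmono : StrictMono i) :
    ∑ m : Fin l, (((K : ℝ) - ((i (m + 1) - i m)).val - 2) / 2)
      = ((l : ℝ) - 1) / 2 * (K : ℝ) - (l : ℝ) := by
  have hgap : ((∑ m : Fin l, ((i (m + 1) - i m)).val : ℕ) : ℝ) = (K : ℝ) := by
    rw [gap_sum hK hl i hmono]
  push_cast at hgap
  rw [← Finset.sum_div, Finset.sum_sub_distrib, Finset.sum_sub_distrib, hgap,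
    Finset.sum_const, Finset.sum_const, Finset.card_univ, Fintype.card_fin]
  field_simp
  ring


end FancyAux

set_option maxHeartbeats 1000000

open FancyAux

/-- **Combinatorial identity** (Lemma 15): let `K ≥ 3` be odd and let `l` be an odd
integer (as the statement refers to the index `i₁′`, it is meaningful for `l > 1`).
Tuples `0 = i₀′ < i₁′ < ⋯ < i_{l-1}′ < K` with `iⱼ′ ≡ j (mod 2)` are encoded as
strictly monotone maps `i' : Fin l → Fin K` with `i' 0 = 0`; the term
`x_k · x_{i₁′+k} · ∏_{1<j<l} x_{iⱼ′+k}` is then `∏_{j<l} x_{i'ⱼ+k}` (indices mod `K`).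
The right-hand side sums over all tuples `0 ≤ i₀ < ⋯ < i_{l-1} < K` with all
consecutive differences odd. -/
theorem fancy_sum (K : ℕ) (hK : 3 ≤ K) (hKodd : Odd K)
    (l : ℕ) (hlodd : Odd l) (hl : 1 < l) (x : Fin K → ℝ) :
    ∑ k : Fin K, ∑ i' ∈ Finset.univ.filter
        (fun i' : Fin l → Fin K =>
          (i' ⟨0, by omega⟩).val = 0 ∧ StrictMono i' ∧
          (∀ j : Fin l, (i' j).val % 2 = j.val % 2) ∧
          (i' ⟨1, hl⟩).val < K - 2),
      (((K : ℝ) - (i' ⟨1, hl⟩).val - 2) / 2) * ∏ j : Fin l, x (i' j + k)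
    = (((l : ℝ) - 1) / 2 * (K : ℝ) - (l : ℝ)) *
      ∑ i ∈ Finset.univ.filter
          (fun i : Fin l → Fin K =>
            StrictMono i ∧
            ∀ (j : Fin l) (hj : j.val + 1 < l),
              Odd ((i ⟨j.val + 1, hj⟩).val - (i j).val)),
        ∏ j : Fin l, x (i j) := by
  
  classical
  haveI : NeZero l := ⟨by omega⟩
  haveI : NeZero K := ⟨by omega⟩
  have hl0 : 0 < l := by omega
  have hK0 : 0 < K := by omega
  calc
    ∑ k : Fin K, ∑ i' ∈ Finset.univ.filter
        (fun i' : Fin l → Fin K =>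
          (i' ⟨0, by omega⟩).val = 0 ∧ StrictMono i' ∧
          (∀ j : Fin l, (i' j).val % 2 = j.val % 2) ∧
          (i' ⟨1, hl⟩).val < K - 2),
      (((K : ℝ) - (i' ⟨1, hl⟩).val - 2) / 2) * ∏ j : Fin l, x (i' j + k)
      = ∑ k : Fin K, ∑ i' ∈ Finset.univ.filter
          (fun i' : Fin l → Fin K =>
            (i' ⟨0, by omega⟩).val = 0 ∧ StrictMono i' ∧
            (∀ j : Fin l, (i' j).val % 2 = j.val % 2)),
        (((K : ℝ) - (i' ⟨1, hl⟩).val - 2) / 2) * ∏ j : Fin l, x (i' j + k) := by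
      refine Finset.sum_congr rfl fun k _ => ?_
      refine Finset.sum_subset ?_ ?_
      · intro a ha
        simp only [Finset.mem_filter, Finset.mem_univ, true_and] at ha ⊢
        exact ⟨ha.1, ha.2.1, ha.2.2.1⟩
      · intro a ha hna
        simp only [Finset.mem_filter, Finset.mem_univ, true_and] at ha hna
        have h1 : ¬ ((a ⟨1, hl⟩).val < K - 2) := by
          intro hcon
          exact hna ⟨ha.1, ha.2.1, ha.2.2, hcon⟩
        have hp := ha.2.2 ⟨1, hl⟩
        have hT : ((⟨1, hl⟩ : Fin l)).val = 1 := rfl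
        rw [hT] at hp
        have hK2 : K % 2 = 1 := Nat.odd_iff.mp hKodd
        have hlt := (a ⟨1, hl⟩).isLt
        have heq : (a ⟨1, hl⟩).val = K - 2 := by omega
        have hcast : (((a ⟨1, hl⟩).val : ℕ) : ℝ) = (K : ℝ) - 2 := by
          rw [heq]
          push_cast [Nat.cast_sub (show 2 ≤ K by omega)]
          ring
        rw [hcast]
        have hz : ((K : ℝ) - ((K : ℝ) - 2) - 2) / 2 = 0 := by ring
        rw [hz, zero_mul]
    _ = ∑ p ∈ (Finset.univ : Finset (Fin K)) ×ˢ Finset.univ.filter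
          (fun i' : Fin l → Fin K =>
            (i' ⟨0, by omega⟩).val = 0 ∧ StrictMono i' ∧
            (∀ j : Fin l, (i' j).val % 2 = j.val % 2)),
        (((K : ℝ) - (p.2 ⟨1, hl⟩).val - 2) / 2) * ∏ j : Fin l, x (p.2 j + p.1) :=
      (Finset.sum_product _ _
        (fun p : Fin K × (Fin l → Fin K) => (((K : ℝ) - (p.2 ⟨1, hl⟩).val - 2) / 2) *
          ∏ j : Fin l, x (p.2 j + p.1))).symm
    _ = ∑ q ∈ (Finset.univ.filter
          (fun i : Fin l → Fin K =>
            StrictMono i ∧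
            ∀ (j : Fin l) (hj : j.val + 1 < l),
              Odd ((i ⟨j.val + 1, hj⟩).val - (i j).val))) ×ˢ (Finset.univ : Finset (Fin l)),
        (((K : ℝ) - ((q.1 (q.2 + 1) - q.1 q.2)).val - 2) / 2) * ∏ j : Fin l, x (q.1 j) := by
      refine Finset.sum_nbij'
        (fun p => (fun t => p.2 (t - (⟨mcount p.1 p.2 % l, Nat.mod_lt _ hl0⟩ : Fin l)) + p.1,
          (⟨mcount p.1 p.2 % l, Nat.mod_lt _ hl0⟩ : Fin l)))
        (fun q => (q.1 q.2, fun j => q.1 (q.2 + j) - q.1 q.2)) ?_ ?_ ?_ ?_ ?_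
      · rintro ⟨k, i'⟩ hp
        simp only [Finset.mem_product, Finset.mem_filter, Finset.mem_univ, true_and,
          and_true] at hp ⊢
        obtain ⟨h0, hmono, hpar⟩ := hp
        have hmlt : mcount k i' < l := mcount_lt hl0 k i' hmono (fun _ => h0)
        have hmod : mcount k i' % l = mcount k i' := Nat.mod_eq_of_lt hmlt
        exact psiA hK hKodd hl hlodd k i' hmono (fun _ => h0) hpar
          ⟨mcount k i' % l, Nat.mod_lt _ hl0⟩ hmod
      · rintro ⟨i, m⟩ hq
        simp only [Finset.mem_product, Finset.mem_filter, Finset.mem_univ, true_and,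
          and_true] at hq ⊢
        obtain ⟨hmono, hodd⟩ := hq
        obtain ⟨h0, hsm, hparr⟩ := sigmaA hK hKodd hl hlodd i hmono hodd m
        exact ⟨h0 hl0, hsm, hparr⟩
      · rintro ⟨k, i'⟩ hp
        simp only [Finset.mem_product, Finset.mem_filter, Finset.mem_univ, true_and] at hp
        obtain ⟨h0, hmono, hpar⟩ := hp
        obtain ⟨hbase, hfun⟩ := phi_psi_gen hl0 k i' (fun _ => h0)
          (⟨mcount k i' % l, Nat.mod_lt _ hl0⟩ : Fin l)
        dsimp only
        refine Prod.ext ?_ ?_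
        · exact hbase
        · funext j
          exact hfun j
      · rintro ⟨i, m⟩ hq
        simp only [Finset.mem_product, Finset.mem_filter, Finset.mem_univ, true_and,
          and_true] at hq
        obtain ⟨hmono, hodd⟩ := hq
        have hms : mcount (i m) (fun j => i (m + j) - i m) = m.val :=
          mcount_sigma hl0 i hmono m
        have hmv := m.isLt
        have hmeq : (⟨mcount (i m) (fun j => i (m + j) - i m) % l,
            Nat.mod_lt _ hl0⟩ : Fin l) = m := by
          apply Fin.ext
          show mcount (i m) (fun j => i (m + j) - i m) % l = m.val
          rw [hms, Nat.mod_eq_of_lt hmv]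
        dsimp only
        rw [hmeq]
        refine Prod.ext ?_ rfl
        funext t
        show (i (m + (t - m)) - i m) + i m = i t
        rw [fin_add_sub_self t m, fin_sub_add_cancel]
      · rintro ⟨k, i'⟩ hp
        simp only [Finset.mem_product, Finset.mem_filter, Finset.mem_univ, true_and] at hp
        obtain ⟨h0, hmono, hpar⟩ := hp
        obtain ⟨hbase, hfun⟩ := phi_psi_gen hl0 k i' (fun _ => h0)
          (⟨mcount k i' % l, Nat.mod_lt _ hl0⟩ : Fin l)
        dsimp only
        have h1l : (1 : Fin l) = ⟨1, hl⟩ := by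
          apply Fin.ext
          rw [Fin.val_one']
          exact Nat.mod_eq_of_lt hl
        rw [hfun 1, h1l]
        have hprod : ∏ j : Fin l, x (i' (j - (⟨mcount k i' % l, Nat.mod_lt _ hl0⟩ : Fin l)) + k)
            = ∏ j : Fin l, x (i' j + k) :=
          Fintype.prod_equiv
            (⟨fun j : Fin l => j - (⟨mcount k i' % l, Nat.mod_lt _ hl0⟩ : Fin l),
              fun j => j + (⟨mcount k i' % l, Nat.mod_lt _ hl0⟩ : Fin l),
              fun j => fin_sub_add_cancel j _, fun j => fin_add_sub_cancel j _⟩)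
            (fun j => x (i' (j - (⟨mcount k i' % l, Nat.mod_lt _ hl0⟩ : Fin l)) + k))
            (fun j => x (i' j + k)) (fun j => rfl)
        rw [hprod]
    _ = ∑ i ∈ Finset.univ.filter
          (fun i : Fin l → Fin K =>
            StrictMono i ∧
            ∀ (j : Fin l) (hj : j.val + 1 < l),
              Odd ((i ⟨j.val + 1, hj⟩).val - (i j).val)),
        ∑ m : Fin l,
          (((K : ℝ) - ((i (m + 1) - i m)).val - 2) / 2) * ∏ j : Fin l, x (i j) :=
      Finset.sum_product _ _
        (fun q : (Fin l → Fin K) × Fin l => (((K : ℝ) - ((q.1 (q.2 + 1) - q.1 q.2)).val - 2) / 2) *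
          ∏ j : Fin l, x (q.1 j))
    _ = ∑ i ∈ Finset.univ.filter
          (fun i : Fin l → Fin K =>
            StrictMono i ∧
            ∀ (j : Fin l) (hj : j.val + 1 < l),
              Odd ((i ⟨j.val + 1, hj⟩).val - (i j).val)),
        (((l : ℝ) - 1) / 2 * (K : ℝ) - (l : ℝ)) * ∏ j : Fin l, x (i j) := by
      refine Finset.sum_congr rfl fun i hi => ?_
      simp only [Finset.mem_filter, Finset.mem_univ, true_and] at hi
      rw [← Finset.sum_mul, weight_sum hK hl i hi.1]
    _ = (((l : ℝ) - 1) / 2 * (K : ℝ) - (l : ℝ)) *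
      ∑ i ∈ Finset.univ.filter
          (fun i : Fin l → Fin K =>
            StrictMono i ∧
            ∀ (j : Fin l) (hj : j.val + 1 < l),
              Odd ((i ⟨j.val + 1, hj⟩).val - (i j).val)),
        ∏ j : Fin l, x (i j) := by
      rw [Finset.mul_sum]
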